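/- Let f : ℝⁿ → ℝ ∪ {+∞} be lower semicontinuous with u ∈ (dom f)^∞ ∩ 𝕊. Then: (1) ∂f(∞;u) equals the set of all limits ξ = lim ξ_k with ξ_k ∈ ∂f(x_k) for some x_k →^u ∞, and also equals the set of all limits ξ = lim ξ_k with ξ_k ∈ ∂̂f(x_k) for some x_k →^u ∞; (2) ∂^∞f(∞;u) equals the set of all limits ξ = lim r_k ξ_k with ξ_k ∈ ∂f(x_k), x_k →^u ∞ and r_k ↓ 0, and this set contains all limits ξ = lim ξ_k with ξ_k ∈ ∂^∞f(x_k), x_k →^u ∞. -/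

import Mathlib

open Filter Topology Set
open scoped RealInnerProductSpace Pointwise

noncomputable section

/-- `ℝⁿ` with the Euclidean structure. -/
abbrev Eu (n : ℕ) := EuclideanSpace ℝ (Fin n)

/-- `x_k →ᵘ ∞` : `‖x_k‖ → ∞` and `x_k / ‖x_k‖ → u`. -/
def TendstoDirInfty {n : ℕ} (x : ℕ → Eu n) (u : Eu n) : Prop :=
  Tendsto (fun k => ‖x k‖) atTop atTop ∧
  Tendsto (fun k => ‖x k‖⁻¹ • x k) atTop (𝓝 u)

/-- The asymptotic cone of `D`: all `u` such that `x_k / t_k → u` for some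
`t_k → +∞` and `x_k ∈ D`. -/
def asymptoticCone' {n : ℕ} (D : Set (Eu n)) : Set (Eu n) :=
  {u | ∃ (t : ℕ → ℝ) (x : ℕ → Eu n), Tendsto t atTop atTop ∧ (∀ k, x k ∈ D) ∧
      Tendsto (fun k => (t k)⁻¹ • x k) atTop (𝓝 u)}

/-- The Euclidean norm of `p ∈ ℝⁿ × ℝ`. -/
def pnorm {n : ℕ} (p : Eu n × ℝ) : ℝ := Real.sqrt (‖p.1‖ ^ 2 + p.2 ^ 2)

/-- The Euclidean inner product on `ℝⁿ × ℝ`. -/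
def pinner {n : ℕ} (v p : Eu n × ℝ) : ℝ := ⟪v.1, p.1⟫ + v.2 * p.2

/-- The Fréchet (regular) normal cone to `S ⊆ ℝⁿ × ℝ` at `q` (empty when `q ∉ S`). -/
def frechetNCP {n : ℕ} (S : Set (Eu n × ℝ)) (q : Eu n × ℝ) : Set (Eu n × ℝ) :=
  {w | q ∈ S ∧ ∀ ε > 0, ∃ δ > 0, ∀ p ∈ S, pnorm (p - q) < δ →
        pinner w (p - q) ≤ ε * pnorm (p - q)}

/-- Epigraph of `f : ℝⁿ → ℝ ∪ {+∞}`. -/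
def epigraph {n : ℕ} (f : Eu n → EReal) : Set (Eu n × ℝ) := {p | f p.1 ≤ (p.2 : EReal)}

/-- The limiting subdifferential of `f` in direction `u` at infinity:
`ξ` with `(ξ_k, -s_k) ∈ N̂((x_k, r_k); epi f)`, `r_k ≥ f(x_k)`, `x_k →ᵘ ∞`,
`(ξ_k, -s_k) → (ξ, -1)`. -/
def dirSubdiffInfty {n : ℕ} (f : Eu n → EReal) (u : Eu n) : Set (Eu n) :=
  {ξ | ∃ (x : ℕ → Eu n) (r : ℕ → ℝ) (w : ℕ → Eu n × ℝ),
      TendstoDirInfty x u ∧ (∀ k, f (x k) ≤ ((r k : ℝ) : EReal)) ∧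
      (∀ k, w k ∈ frechetNCP (epigraph f) (x k, r k)) ∧
      Tendsto w atTop (𝓝 (ξ, (-1 : ℝ)))}

/-- The singular subdifferential of `f` in direction `u` at infinity. -/
def dirSingSubdiffInfty {n : ℕ} (f : Eu n → EReal) (u : Eu n) : Set (Eu n) :=
  {ξ | ∃ (x : ℕ → Eu n) (r : ℕ → ℝ) (w : ℕ → Eu n × ℝ),
      TendstoDirInfty x u ∧ (∀ k, f (x k) ≤ ((r k : ℝ) : EReal)) ∧
      (∀ k, w k ∈ frechetNCP (epigraph f) (x k, r k)) ∧
      Tendsto w atTop (𝓝 (ξ, (0 : ℝ)))}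

/-- The limiting (Mordukhovich) normal cone to `S ⊆ ℝⁿ × ℝ` at `q`: all limits of
Fréchet normals at points of `S` converging to `q`. -/
def limitingNCP {n : ℕ} (S : Set (Eu n × ℝ)) (q : Eu n × ℝ) : Set (Eu n × ℝ) :=
  {w | ∃ (s v : ℕ → Eu n × ℝ), (∀ k, s k ∈ S) ∧ Tendsto s atTop (𝓝 q) ∧
      (∀ k, v k ∈ frechetNCP S (s k)) ∧ Tendsto v atTop (𝓝 w)}

/-- The Fréchet (regular) subdifferential of `f` at `x`. -/
def frechetSubdiff {n : ℕ} (f : Eu n → EReal) (x : Eu n) : Set (Eu n) :=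
  {v | (v, (-1 : ℝ)) ∈ frechetNCP (epigraph f) (x, (f x).toReal)}

/-- The limiting (Mordukhovich) subdifferential of `f` at `x`. -/
def limitingSubdiff {n : ℕ} (f : Eu n → EReal) (x : Eu n) : Set (Eu n) :=
  {v | (v, (-1 : ℝ)) ∈ limitingNCP (epigraph f) (x, (f x).toReal)}

/-- The singular subdifferential of `f` at `x`. -/
def singSubdiff {n : ℕ} (f : Eu n → EReal) (x : Eu n) : Set (Eu n) :=
  {v | (v, (0 : ℝ)) ∈ limitingNCP (epigraph f) (x, (f x).toReal)}

namespace Aux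


variable {n : ℕ}

lemma pnorm_nonneg (p : Eu n × ℝ) : 0 ≤ pnorm p := Real.sqrt_nonneg _

lemma pnorm_fst_le (p : Eu n × ℝ) : ‖p.1‖ ≤ pnorm p := by
  have h := Real.sqrt_le_sqrt (show ‖p.1‖^2 ≤ ‖p.1‖^2 + p.2^2 by nlinarith [sq_nonneg p.2])
  rwa [Real.sqrt_sq (norm_nonneg _)] at h

lemma pnorm_snd_le (p : Eu n × ℝ) : |p.2| ≤ pnorm p := by
  have h := Real.sqrt_le_sqrt (show p.2^2 ≤ ‖p.1‖^2 + p.2^2 by nlinarith [sq_nonneg ‖p.1‖])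
  rwa [Real.sqrt_sq_eq_abs] at h

lemma pnorm_le_add (p : Eu n × ℝ) : pnorm p ≤ ‖p.1‖ + |p.2| := by
  have h : ‖p.1‖^2 + p.2^2 ≤ (‖p.1‖ + |p.2|)^2 := by
    nlinarith [abs_nonneg p.2, norm_nonneg p.1, sq_abs p.2]
  have := Real.sqrt_le_sqrt h
  rwa [Real.sqrt_sq (by positivity)] at this

lemma pnorm_sq (p : Eu n × ℝ) : pnorm p ^ 2 = ‖p.1‖ ^ 2 + p.2 ^ 2 :=
  Real.sq_sqrt (by positivity)

lemma pnorm_mk_zero (x : Eu n) : pnorm (x, (0:ℝ)) = ‖x‖ := by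
  simp [pnorm, Real.sqrt_sq (norm_nonneg x)]

lemma pnorm_zero_mk (t : ℝ) : pnorm ((0 : Eu n), t) = |t| := by
  simp [pnorm, Real.sqrt_sq_eq_abs]

lemma pnorm_le_norm_two (p : Eu n × ℝ) : pnorm p ≤ 2 * ‖p‖ := by
  refine (pnorm_le_add p).trans ?_
  rw [Prod.norm_def]
  have h1 : ‖p.1‖ ≤ ‖p.1‖ ⊔ ‖p.2‖ := le_max_left _ _
  have h2 : |p.2| ≤ ‖p.1‖ ⊔ ‖p.2‖ := (Real.norm_eq_abs p.2) ▸ le_max_right _ _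
  linarith

lemma norm_le_pnorm (p : Eu n × ℝ) : ‖p‖ ≤ pnorm p := by
  rw [Prod.norm_def]
  exact max_le (pnorm_fst_le p) ((Real.norm_eq_abs p.2) ▸ pnorm_snd_le p)




lemma pinner_smul_left (t : ℝ) (w p : Eu n × ℝ) : pinner (t • w) p = t * pinner w p := by
  show ⟪t • w.1, p.1⟫ + (t * w.2) * p.2 = t * (⟪w.1, p.1⟫ + w.2 * p.2)
  rw [real_inner_smul_left]; ring

lemma frechetNCP_smul {S : Set (Eu n × ℝ)} {q w : Eu n × ℝ} (hw : w ∈ frechetNCP S q)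
    {t : ℝ} (ht : 0 < t) : t • w ∈ frechetNCP S q := by
  refine ⟨hw.1, fun ε hε => ?_⟩
  obtain ⟨δ, hδ, hδ'⟩ := hw.2 (ε / t) (by positivity)
  refine ⟨δ, hδ, fun p hp hpd => ?_⟩
  rw [pinner_smul_left]
  have h2 := hδ' p hp hpd
  calc t * pinner w (p - q) ≤ t * (ε / t * pnorm (p - q)) :=
        mul_le_mul_of_nonneg_left h2 ht.le
    _ = ε * pnorm (p - q) := by field_simp

lemma isClosed_epigraph {f : Eu n → EReal} (hf : LowerSemicontinuous f) :
    IsClosed (epigraph f) := by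
  have h := hf.isClosed_epigraph
  have he : epigraph f
      = (fun p : Eu n × ℝ => (p.1, (p.2 : EReal))) ⁻¹' {p : Eu n × EReal | f p.1 ≤ p.2} := rfl
  rw [he]
  exact h.preimage (continuous_fst.prodMk (continuous_coe_real_ereal.comp continuous_snd))

lemma mk_sub_mk' (x y : Eu n) (a b : ℝ) : ((x, a) : Eu n × ℝ) - (y, b) = (x - y, a - b) := rfl

lemma snd_nonpos {f : Eu n → EReal} {x : Eu n} {r : ℝ} {w : Eu n × ℝ}
    (hw : w ∈ frechetNCP (epigraph f) (x, r)) : w.2 ≤ 0 := by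
  by_contra h
  push_neg at h
  obtain ⟨δ, hδ, hδ'⟩ := hw.2 (w.2 / 2) (by linarith)
  have hmem : ((x, r + δ/2) : Eu n × ℝ) ∈ epigraph f :=
    le_trans hw.1 (EReal.coe_le_coe_iff.2 (by linarith))
  have hsub : ((x, r + δ/2) : Eu n × ℝ) - (x, r) = ((0 : Eu n), δ/2) := by
    rw [mk_sub_mk', sub_self]; congr 1; ring
  have hlt : pnorm (((x, r + δ/2) : Eu n × ℝ) - (x, r)) < δ := by
    rw [hsub, pnorm_zero_mk, abs_of_pos (by linarith : (0:ℝ) < δ/2)]; linarith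
  have key := hδ' _ hmem hlt
  rw [hsub, pnorm_zero_mk, abs_of_pos (by linarith : (0:ℝ) < δ/2)] at key
  have hpin : pinner w ((0 : Eu n), δ/2) = w.2 * (δ/2) := by simp [pinner]
  rw [hpin] at key
  nlinarith

lemma pin_of_neg {f : Eu n → EReal} (hfbot : ∀ x, f x ≠ ⊥) {x : Eu n} {r : ℝ} {w : Eu n × ℝ}
    (hw : w ∈ frechetNCP (epigraph f) (x, r)) (h2 : w.2 < 0) : f x = (r : EReal) := by
  have hle : f x ≤ (r : EReal) := hw.1
  rcases eq_or_lt_of_le hle with h | h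
  · exact h
  exfalso
  have hxt : f x ≠ ⊤ := (h.trans (EReal.coe_lt_top r)).ne
  set F := (f x).toReal with hF
  have hfx : f x = (F : EReal) := (EReal.coe_toReal hxt (hfbot x)).symm
  have hFr : F < r := by rwa [hfx, EReal.coe_lt_coe_iff] at h
  obtain ⟨δ, hδ, hδ'⟩ := hw.2 (-w.2 / 2) (by linarith)
  set t := min (δ/2) (r - F) with htdef
  have ht : 0 < t := lt_min (by linarith) (by linarith)
  have ht1 : t ≤ δ/2 := min_le_left _ _
  have ht2 : t ≤ r - F := min_le_right _ _
  have hmem : ((x, r - t) : Eu n × ℝ) ∈ epigraph f := by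
    rw [epigraph, mem_setOf_eq, hfx]
    exact EReal.coe_le_coe_iff.2 (show F ≤ r - t by linarith)
  have hsub : ((x, r - t) : Eu n × ℝ) - (x, r) = ((0 : Eu n), -t) := by
    rw [mk_sub_mk', sub_self]; congr 1; ring
  have heq : pnorm (((x, r - t) : Eu n × ℝ) - (x, r)) = t := by
    rw [hsub, pnorm_zero_mk, abs_neg, abs_of_pos ht]
  have hlt : pnorm (((x, r - t) : Eu n × ℝ) - (x, r)) < δ := by rw [heq]; linarith
  have key := hδ' _ hmem hlt
  rw [hsub] at key
  rw [show pnorm (((0 : Eu n), -t) : Eu n × ℝ) = t by rw [pnorm_zero_mk, abs_neg, abs_of_pos ht]] at key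
  have hpin : pinner w ((0 : Eu n), -t) = -(w.2 * t) := by simp [pinner]
  rw [hpin] at key
  nlinarith

lemma frechetSubdiff_of_neg {f : Eu n → EReal} (hfbot : ∀ x, f x ≠ ⊥) {x : Eu n} {r : ℝ}
    {w : Eu n × ℝ} (hw : w ∈ frechetNCP (epigraph f) (x, r)) (h2 : w.2 < 0) :
    (-w.2)⁻¹ • w.1 ∈ frechetSubdiff f x := by
  have hfx : f x = (r : EReal) := pin_of_neg hfbot hw h2
  have hr : (f x).toReal = r := by rw [hfx]; exact EReal.toReal_coe r
  have hs := frechetNCP_smul hw (t := (-w.2)⁻¹) (inv_pos.2 (by linarith))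
  have hsw : (-w.2)⁻¹ • w = ((-w.2)⁻¹ • w.1, (-1 : ℝ)) := by
    ext
    · rfl
    · show (-w.2)⁻¹ * w.2 = -1
      rw [inv_mul_eq_div, div_neg, div_self (ne_of_lt h2)]
  rw [hsw] at hs
  rw [frechetSubdiff, mem_setOf_eq, hr]
  exact hs




lemma tendsto_inv_nat : Tendsto (fun k : ℕ => 1 / ((k : ℝ) + 1)) atTop (𝓝 0) :=
  tendsto_one_div_add_atTop_nhds_zero_nat

lemma tendsto_of_norm_sub_le {E : Type*} [NormedAddCommGroup E] {a b : ℕ → E} {L : E}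
    (ha : Tendsto a atTop (𝓝 L)) (h : ∀ k, ‖b k - a k‖ ≤ 1 / ((k : ℝ) + 1)) :
    Tendsto b atTop (𝓝 L) := by
  have h0 : Tendsto (fun k => b k - a k) atTop (𝓝 0) := by
    rw [tendsto_zero_iff_norm_tendsto_zero]
    exact squeeze_zero (fun k => norm_nonneg _) h tendsto_inv_nat
  have := h0.add ha
  simpa using this

lemma tendstoDirInfty_tail {x : ℕ → Eu n} {u : Eu n} (h : TendstoDirInfty x u) (N : ℕ) :
    TendstoDirInfty (fun k => x (k + N)) u :=
  ⟨h.1.comp (tendsto_add_atTop_nat N), h.2.comp (tendsto_add_atTop_nat N)⟩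

lemma tendstoDirInfty_of_close {x y : ℕ → Eu n} {u : Eu n} (h : TendstoDirInfty x u)
    (hc : ∀ k, ‖y k - x k‖ ≤ 1) : TendstoDirInfty y u := by
  have hxy : ∀ k, ‖x k‖ - 1 ≤ ‖y k‖ := by
    intro k
    have := norm_sub_norm_le (x k) (y k)
    have h2 := hc k
    rw [norm_sub_rev] at h2
    linarith [abs_le.1 (abs_norm_sub_norm_le (x k) (y k))]
  have hy1 : Tendsto (fun k => ‖y k‖) atTop atTop :=
    tendsto_atTop_mono hxy (tendsto_atTop_add_const_right _ (-1) h.1 |>.congr (by intro k; ring_nf))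
  constructor
  · exact hy1
  · -- ‖y‖⁻¹ • y = ‖x‖⁻¹ • x + e with ‖e‖ ≤ 2/‖y‖ eventually
    have hev : ∀ᶠ k in atTop, ‖(‖y k‖⁻¹ • y k) - (‖x k‖⁻¹ • x k)‖ ≤ 2 / ‖y k‖ := by
      have h1 : ∀ᶠ k in atTop, (1:ℝ) ≤ ‖x k‖ := h.1.eventually_ge_atTop 1
      have h2 : ∀ᶠ k in atTop, (1:ℝ) ≤ ‖y k‖ := hy1.eventually_ge_atTop 1
      filter_upwards [h1, h2] with k hk1 hk2
      have hx0 : ‖x k‖ ≠ 0 := by linarith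
      have hy0 : ‖y k‖ ≠ 0 := by linarith
      have hid : ‖y k‖⁻¹ • y k - ‖x k‖⁻¹ • x k
          = ‖y k‖⁻¹ • (y k - x k) + (‖y k‖⁻¹ - ‖x k‖⁻¹) • x k := by
        rw [smul_sub, sub_smul]; abel
      rw [hid]
      have hb1 : ‖‖y k‖⁻¹ • (y k - x k)‖ ≤ ‖y k‖⁻¹ := by
        rw [norm_smul, norm_inv, norm_norm]
        calc ‖y k‖⁻¹ * ‖y k - x k‖ ≤ ‖y k‖⁻¹ * 1 := by
              exact mul_le_mul_of_nonneg_left (hc k) (by positivity)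
          _ = ‖y k‖⁻¹ := mul_one _
      have hb2 : ‖(‖y k‖⁻¹ - ‖x k‖⁻¹) • x k‖ ≤ ‖y k‖⁻¹ := by
        rw [norm_smul, Real.norm_eq_abs]
        have hd : ‖y k‖⁻¹ - ‖x k‖⁻¹ = (‖x k‖ - ‖y k‖) / (‖y k‖ * ‖x k‖) := by
          field_simp
        have habs : |‖x k‖ - ‖y k‖| ≤ 1 := by
          have h3 : ‖x k - y k‖ ≤ 1 := by rw [norm_sub_rev]; exact hc k
          linarith [abs_norm_sub_norm_le (x k) (y k)]
        rw [hd, abs_div, abs_of_pos (by nlinarith : (0:ℝ) < ‖y k‖ * ‖x k‖)]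
        have heq2 : |‖x k‖ - ‖y k‖| / (‖y k‖ * ‖x k‖) * ‖x k‖ = |‖x k‖ - ‖y k‖| / ‖y k‖ := by
          field_simp
        rw [heq2]
        calc |‖x k‖ - ‖y k‖| / ‖y k‖ ≤ 1 / ‖y k‖ := by gcongr
          _ = ‖y k‖⁻¹ := one_div _
      calc ‖_ + _‖ ≤ _ := norm_add_le _ _
        _ ≤ ‖y k‖⁻¹ + ‖y k‖⁻¹ := add_le_add hb1 hb2
        _ = 2 / ‖y k‖ := by rw [div_eq_mul_inv]; ring
    have h20 : Tendsto (fun k => 2 / ‖y k‖) atTop (𝓝 0) :=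
      Tendsto.div_atTop tendsto_const_nhds hy1
    have hdiff : Tendsto (fun k => (‖y k‖⁻¹ • y k) - (‖x k‖⁻¹ • x k)) atTop (𝓝 0) := by
      rw [tendsto_zero_iff_norm_tendsto_zero]
      apply squeeze_zero' (Eventually.of_forall fun k => norm_nonneg _) hev h20
    have := hdiff.add h.2
    simpa using this


lemma approx_of_limitingNCP {S : Set (Eu n × ℝ)} {q w : Eu n × ℝ}
    (hw : w ∈ limitingNCP S q) {e : ℝ} (he : 0 < e) :
    ∃ s' w', s' ∈ S ∧ ‖s' - q‖ < e ∧ w' ∈ frechetNCP S s' ∧ ‖w' - w‖ < e := by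
  obtain ⟨s, v, hs, hsq, hv, hvw⟩ := hw
  have h1 : ∀ᶠ k in atTop, ‖s k - q‖ < e := by
    have := (tendsto_iff_norm_sub_tendsto_zero.1 hsq).eventually (eventually_lt_nhds he)
    simpa using this
  have h2 : ∀ᶠ k in atTop, ‖v k - w‖ < e := by
    have := (tendsto_iff_norm_sub_tendsto_zero.1 hvw).eventually (eventually_lt_nhds he)
    simpa using this
  obtain ⟨k, hk1, hk2⟩ := (h1.and h2).exists
  exact ⟨s k, v k, hs k, hk1, hv k, hk2⟩

lemma frechetSubdiff_subset_limiting {f : Eu n → EReal} {x : Eu n} :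
    frechetSubdiff f x ⊆ limitingSubdiff f x := by
  intro v hv
  exact ⟨fun _ => (x, (f x).toReal), fun _ => (v, -1), fun _ => hv.1, tendsto_const_nhds,
    fun _ => hv, tendsto_const_nhds⟩

/-- Assembly: from pointwise limiting normals along a direction sequence to a
direct `at infinity` datum. -/
lemma toInfty_data {f : Eu n → EReal} {u : Eu n} {x : ℕ → Eu n} {q : ℕ → Eu n × ℝ}
    {T : Eu n × ℝ} (hx : TendstoDirInfty x u)
    (hq : ∀ k, q k ∈ limitingNCP (epigraph f) (x k, (f (x k)).toReal))
    (hlim : Tendsto q atTop (𝓝 T)) :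
    ∃ (X : ℕ → Eu n) (R : ℕ → ℝ) (W : ℕ → Eu n × ℝ),
      TendstoDirInfty X u ∧ (∀ k, f (X k) ≤ ((R k : ℝ) : EReal)) ∧
      (∀ k, W k ∈ frechetNCP (epigraph f) (X k, R k)) ∧ Tendsto W atTop (𝓝 T) := by
  have hch : ∀ k, ∃ s' w', s' ∈ epigraph f ∧ ‖s' - (x k, (f (x k)).toReal)‖ < 1/((k:ℝ)+1) ∧
      w' ∈ frechetNCP (epigraph f) s' ∧ ‖w' - q k‖ < 1/((k:ℝ)+1) := by
    intro k
    exact approx_of_limitingNCP (hq k) (by positivity)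
  choose s' w' hs1 hs2 hs3 hs4 using hch
  refine ⟨fun k => (s' k).1, fun k => (s' k).2, w', ?_, ?_, ?_, ?_⟩
  · apply tendstoDirInfty_of_close hx
    intro k
    have h1 : ‖(s' k - (x k, (f (x k)).toReal)).1‖ ≤ ‖s' k - (x k, (f (x k)).toReal)‖ :=
      norm_fst_le _
    have h3 : (1:ℝ)/((k:ℝ)+1) ≤ 1 := by
      rw [div_le_one (by positivity)]; linarith [Nat.cast_nonneg (α := ℝ) k]
    calc ‖(s' k).1 - x k‖ = ‖(s' k - (x k, (f (x k)).toReal)).1‖ := rfl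
      _ ≤ _ := h1
      _ ≤ 1/((k:ℝ)+1) := (hs2 k).le
      _ ≤ 1 := h3
  · intro k; exact hs1 k
  · intro k
    have : ((s' k).1, (s' k).2) = s' k := rfl
    rw [this]; exact hs3 k
  · exact tendsto_of_norm_sub_le hlim (fun k => (hs4 k).le)



lemma max_sq_le_expand (s t : ℝ) :
    (max s 0)^2 ≤ (max t 0)^2 + 2*(max t 0)*(s - t) + (s - t)^2 := by
  have key : (max s 0)^2 ≤ (max t 0 + (s - t))^2 := by
    rcases le_or_gt s 0 with hs | hs
    · rw [max_eq_right hs]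
      simpa using sq_nonneg (max t 0 + (s - t))
    · rw [max_eq_left hs.le]
      have h1 : s ≤ max t 0 + (s - t) := by
        have := le_max_left t 0
        linarith
      nlinarith
  nlinarith [key]

lemma helper_int {c P C d r : ℝ} (hc : 0 < c) (hr : 0 < r) (hC1 : 1 ≤ C)
    (hC2 : 8*c < C*r) (hP : P ≤ r^2/8) (hkey : C*d^2 ≤ c*d + P) (hd : d ≤ r) : d < r := by
  by_contra hcon
  push_neg at hcon
  have hdr : d = r := le_antisymm hd hcon
  subst hdr
  nlinarith [mul_lt_mul_of_pos_right hC2 hr, mul_le_mul_of_nonneg_right hC1 (sq_nonneg d)]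

lemma helper_bd {c P C d ε : ℝ} (hc : c = ε/16) (hε : 0 < ε) (hC1 : 1 ≤ C)
    (hd0 : 0 ≤ d) (hkey : C*d^2 ≤ c*d + P) (hP : P*C ≤ ε^2/128) : 2*C*d ≤ ε/2 := by
  subst hc
  by_contra hcon
  push_neg at hcon
  have h4 : 4*C*(C*d^2) ≤ 4*C*(ε/16*d + P) :=
    mul_le_mul_of_nonneg_left hkey (by linarith)
  nlinarith [h4, hP, hε, hcon, mul_nonneg (mul_nonneg (by linarith : (0:ℝ) ≤ 2*C) hd0) hε.le]

lemma helper_sum {c C d h : ℝ} (hc : 0 < c) (hC0 : 0 < C) (hd0 : 0 ≤ d) (hh0 : 0 ≤ h)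
    (hkey : C*(d^2 + h^2) ≤ c*(d + h)) : C*(d + h) ≤ 2*c := by
  by_contra hcon
  push_neg at hcon
  have hdh : 0 < d + h := by
    rcases lt_or_ge 0 (d + h) with h1 | h1
    · exact h1
    · exfalso
      have : d + h = 0 := le_antisymm h1 (by linarith)
      rw [this] at hcon
      simp at hcon
      linarith
  nlinarith [sq_nonneg (d - h), mul_pos hC0 hdh]

lemma helper_fin {C pn e : ℝ} (hC0 : 0 < C) (h1 : pn < e/C) (h2 : 0 ≤ pn) :
    C*pn^2 ≤ e*pn := by
  have h3 := mul_le_mul_of_nonneg_right h1.le h2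
  calc C*pn^2 = C*(pn*pn) := by ring
    _ ≤ C*(e/C*pn) := mul_le_mul_of_nonneg_left h3 hC0.le
    _ = e*pn := by field_simp

set_option maxHeartbeats 2000000 in
lemma lemA {f : Eu n → EReal} (hf : LowerSemicontinuous f) (hfbot : ∀ x, f x ≠ ⊥)
    {xb : Eu n} {rb : ℝ} {v : Eu n}
    (hv : ((v, (0:ℝ)) : Eu n × ℝ) ∈ frechetNCP (epigraph f) (xb, rb))
    {ε : ℝ} (hε : 0 < ε) :
    ∃ (x : Eu n) (lam : ℝ) (g : Eu n), ‖x - xb‖ ≤ ε ∧ 0 < lam ∧ lam ≤ ε ∧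
      g ∈ frechetSubdiff f x ∧ ‖lam • g - v‖ ≤ ε := by
  have hpin0 : ∀ p : Eu n × ℝ, pinner ((v, (0:ℝ)) : Eu n × ℝ) p = ⟪v, p.1⟫ := by
    intro p; simp [pinner]
  have hfr : f xb ≤ (rb : EReal) := hv.1
  have hftop : f xb ≠ ⊤ := (lt_of_le_of_lt hfr (EReal.coe_lt_top rb)).ne
  obtain ⟨F, hFdef⟩ : ∃ F : ℝ, F = (f xb).toReal := ⟨_, rfl⟩
  have hfx : f xb = (F : EReal) := by rw [hFdef]; exact (EReal.coe_toReal hftop (hfbot xb)).symm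
  have hFr : F ≤ rb := by rwa [hfx, EReal.coe_le_coe_iff] at hfr
  obtain ⟨c, hcdef⟩ : ∃ c : ℝ, c = ε/16 := ⟨_, rfl⟩
  have hc : 0 < c := by rw [hcdef]; positivity
  obtain ⟨δ₀, hδ₀pos, hδ₀⟩ := hv.2 c hc
  obtain ⟨δ, hδdef⟩ : ∃ δ : ℝ, δ = min δ₀ 1 := ⟨_, rfl⟩
  have hδpos : 0 < δ := by rw [hδdef]; exact lt_min hδ₀pos one_pos
  have hδ1 : δ ≤ 1 := by rw [hδdef]; exact min_le_right _ _
  have hδδ₀ : δ ≤ δ₀ := by rw [hδdef]; exact min_le_left _ _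
  have hδ' : ∀ p ∈ epigraph f, pnorm (p - (xb, rb)) < δ →
      ⟪v, p.1 - xb⟫ ≤ c * pnorm (p - (xb, rb)) := by
    intro p hp hpd
    have := hδ₀ p hp (lt_of_lt_of_le hpd hδδ₀)
    rwa [hpin0] at this
  have hlsc : ∀ᶠ y in 𝓝 xb, ((F - 1 : ℝ) : EReal) < f y := by
    apply hf xb
    rw [hfx]
    exact EReal.coe_lt_coe_iff.2 (by linarith)
  obtain ⟨ρ₀, hρ₀pos, hρ₀⟩ := Metric.eventually_nhds_iff.1 hlsc
  obtain ⟨r1, hr1def⟩ : ∃ r1 : ℝ, r1 = min (δ/4) (min (ρ₀/2) (ε/2)) := ⟨_, rfl⟩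
  have hr1pos : 0 < r1 := by
    rw [hr1def]
    exact lt_min (by linarith only [hδpos]) (lt_min (by linarith only [hρ₀pos])
      (by linarith only [hε]))
  have hr1δ : r1 ≤ δ/4 := by rw [hr1def]; exact min_le_left _ _
  have hr1ρ₀ : r1 < ρ₀ := by
    have h1 : min (δ/4) (min (ρ₀/2) (ε/2)) ≤ ρ₀/2 := (min_le_right _ _).trans (min_le_left _ _)
    rw [hr1def]
    linarith only [h1, hρ₀pos]
  have hr1ε : r1 ≤ ε/2 := by
    rw [hr1def]
    exact (min_le_right _ _).trans (min_le_right _ _)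
  obtain ⟨r2, hr2def⟩ : ∃ r2 : ℝ, r2 = δ/4 := ⟨_, rfl⟩
  have hr2pos : 0 < r2 := by linarith only [hr2def, hδpos]
  obtain ⟨b, hbdef⟩ : ∃ b : ℝ, b = F - 2 := ⟨_, rfl⟩
  obtain ⟨E, hEdef⟩ : ∃ E : ℝ, E = rb - F + 2 := ⟨_, rfl⟩
  have hE2 : 2 ≤ E := by rw [hEdef]; linarith only [hFr]
  have hEpos : 0 < E := by linarith only [hE2]
  obtain ⟨C, hCdef⟩ : ∃ C : ℝ, C = 1 + 8*c/r1 + 8*c/δ := ⟨_, rfl⟩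
  have h01 : 0 ≤ 8*c/r1 := div_nonneg (by linarith only [hc]) hr1pos.le
  have h02 : 0 ≤ 8*c/δ := div_nonneg (by linarith only [hc]) hδpos.le
  have hC1 : 1 ≤ C := by rw [hCdef]; linarith only [h01, h02]
  have hC0 : 0 < C := lt_of_lt_of_le one_pos hC1
  have hC2 : 8*c < C*r1 := by
    have h1 : (8*c/r1) * r1 = 8*c := by field_simp
    have h2 : 0 < (1 + 8*c/δ) * r1 := mul_pos (by linarith only [h02]) hr1pos
    calc 8*c = (8*c/r1) * r1 := h1.symm
      _ < (8*c/r1) * r1 + (1 + 8*c/δ) * r1 := by linarith only [h2]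
      _ = C*r1 := by rw [hCdef]; ring
  have hC3 : 8*c < C*δ := by
    have h1 : (8*c/δ) * δ = 8*c := by field_simp
    have h2 : 0 < (1 + 8*c/r1) * δ := mul_pos (by linarith only [h01]) hδpos
    calc 8*c = (8*c/δ) * δ := h1.symm
      _ < (8*c/δ) * δ + (1 + 8*c/r1) * δ := by linarith only [h2]
      _ = C*δ := by rw [hCdef]; ring
  obtain ⟨σ, hσdef⟩ : ∃ σ : ℝ, σ = min c (min (r1^2/(8*E)) (ε^2/(128*E*C))) := ⟨_, rfl⟩
  have hσpos : 0 < σ := by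
    rw [hσdef]
    refine lt_min hc (lt_min (div_pos (pow_pos hr1pos 2) (by linarith only [hEpos])) ?_)
    exact div_pos (pow_pos hε 2)
      (mul_pos (mul_pos (by norm_num : (0:ℝ) < 128) hEpos) hC0)
  have hσc : σ ≤ c := by rw [hσdef]; exact min_le_left _ _
  have hσ2 : σ*E ≤ r1^2/8 := by
    have h1 : σ ≤ r1^2/(8*E) := by
      rw [hσdef]; exact (min_le_right _ _).trans (min_le_left _ _)
    calc σ*E ≤ (r1^2/(8*E))*E := mul_le_mul_of_nonneg_right h1 hEpos.le
      _ = r1^2/8 := by field_simp [hEpos.ne']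
  have hσ3 : σ*E*C ≤ ε^2/128 := by
    have h1 : σ ≤ ε^2/(128*E*C) := by
      rw [hσdef]; exact (min_le_right _ _).trans (min_le_right _ _)
    calc σ*E*C ≤ (ε^2/(128*E*C))*E*C :=
          mul_le_mul_of_nonneg_right (mul_le_mul_of_nonneg_right h1 hEpos.le) hC0.le
      _ = ε^2/128 := by field_simp [hEpos.ne', hC0.ne']
  -- the constraint set and the penalty function
  set K : Set (Eu n × ℝ) :=
    {p | p ∈ epigraph f ∧ (‖p.1 - xb‖ ≤ r1 ∧ (b ≤ p.2 ∧ p.2 ≤ rb + r2))} with hKdef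
  set Θ : Eu n × ℝ → ℝ := fun p =>
    -⟪v, p.1 - xb⟫ + σ*(p.2 - rb) + C*(‖p.1 - xb‖^2 + (max (p.2 - rb) 0)^2) with hΘdef
  have hΘval : ∀ p : Eu n × ℝ,
      Θ p = -⟪v, p.1 - xb⟫ + σ*(p.2 - rb) + C*(‖p.1 - xb‖^2 + (max (p.2 - rb) 0)^2) :=
    fun p => rfl
  have hKclosed : IsClosed K := by
    have h1 : K = epigraph f ∩ ({p : Eu n × ℝ | ‖p.1 - xb‖ ≤ r1} ∩
        ({p : Eu n × ℝ | b ≤ p.2} ∩ {p : Eu n × ℝ | p.2 ≤ rb + r2})) := rfl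
    rw [h1]
    refine (isClosed_epigraph hf).inter (IsClosed.inter ?_ (IsClosed.inter ?_ ?_))
    · exact isClosed_le (by fun_prop) continuous_const
    · exact isClosed_le continuous_const continuous_snd
    · exact isClosed_le continuous_snd continuous_const
  have hKbdd : Bornology.IsBounded K := by
    apply (Metric.isBounded_closedBall (x := ((xb, rb) : Eu n × ℝ)) (r := r1 + E + r2)).subset
    intro p hp
    obtain ⟨hp1, hp2, hp3, hp4⟩ := hp
    rw [Metric.mem_closedBall, Prod.dist_eq]
    have hd1 : dist p.1 xb ≤ r1 := by rwa [dist_eq_norm]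
    have hp3' : b ≤ p.2 := hp3
    have hd2 : dist p.2 rb ≤ E + r2 := by
      rw [Real.dist_eq, abs_le]
      constructor
      · linarith only [hp3', hr2pos, hEdef, hbdef]
      · linarith only [hp4, hFr, hEdef]
    exact max_le (by linarith only [hd1, hEpos, hr2pos]) (by linarith only [hd2, hr1pos])
  have hKne : ((xb, rb) : Eu n × ℝ) ∈ K := by
    refine ⟨hv.1, ?_, ?_, ?_⟩
    · simp only [sub_self, norm_zero]; exact hr1pos.le
    · show b ≤ rb
      linarith only [hFr, hbdef]
    · show rb ≤ rb + r2
      linarith only [hr2pos]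
  have hΘcont : Continuous Θ := by
    apply Continuous.add
    apply Continuous.add
    · exact (continuous_const.inner (continuous_fst.sub continuous_const)).neg
    · fun_prop
    · fun_prop
  obtain ⟨q, hqK, hqmin⟩ := (Metric.isCompact_of_isClosed_isBounded hKclosed hKbdd).exists_isMinOn
    ⟨_, hKne⟩ hΘcont.continuousOn
  obtain ⟨x₁, a₁⟩ := q
  obtain ⟨hq_epi, hq_ball, hq_lb, hq_ub⟩ := hqK
  dsimp only at hq_ball hq_lb hq_ub
  have hq_epi' : f x₁ ≤ (a₁ : EReal) := hq_epi
  have h00 : Θ ((xb, rb) : Eu n × ℝ) = 0 := by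
    rw [hΘval]
    simp
  have hq0 : Θ ((x₁, a₁) : Eu n × ℝ) ≤ 0 := le_of_le_of_eq (hqmin hKne) h00
  have hkey : σ*(a₁ - rb) + C*(‖x₁ - xb‖^2 + (max (a₁ - rb) 0)^2) ≤ ⟪v, x₁ - xb⟫ := by
    have h1 := hq0
    rw [hΘval] at h1
    dsimp only at h1
    linarith only [h1]
  have hmain : ‖x₁ - xb‖ < r1 ∧ 2*C*‖x₁ - xb‖ ≤ ε/2 ∧ 2*C*(max (a₁ - rb) 0) ≤ 4*c ∧
      a₁ < rb + r2 := by
    rcases le_or_gt a₁ rb with hcase | hcase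
    · -- below the reference level : vertical ray trick
      have hhz : max (a₁ - rb) 0 = 0 := max_eq_right (by linarith only [hcase])
      have hvert : ((x₁, rb) : Eu n × ℝ) ∈ epigraph f :=
        le_trans hq_epi' (EReal.coe_le_coe_iff.2 hcase)
      have hsub2 : ((x₁, rb) : Eu n × ℝ) - (xb, rb) = (x₁ - xb, 0) := by
        rw [mk_sub_mk', sub_self]
      have hpn : pnorm (((x₁, rb) : Eu n × ℝ) - (xb, rb)) = ‖x₁ - xb‖ := by
        rw [hsub2]
        simp [pnorm, Real.sqrt_sq (norm_nonneg _)]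
      have hlt : pnorm (((x₁, rb) : Eu n × ℝ) - (xb, rb)) < δ := by
        rw [hpn]
        linarith only [hq_ball, hr1δ, hδpos]
      have hn := hδ' _ hvert hlt
      rw [hpn] at hn
      dsimp only at hn
      have hE' : rb - a₁ ≤ E := by
        linarith only [hq_lb, hbdef, hEdef]
      have hσa : σ*(rb - a₁) ≤ σ*E := mul_le_mul_of_nonneg_left hE' hσpos.le
      have hsq0 : C*((max (a₁ - rb) 0)^2) = 0 := by rw [hhz]; ring
      have hkey1 : C*‖x₁ - xb‖^2 ≤ c*‖x₁ - xb‖ + σ*E := by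
        linarith only [hkey, hn, hσa, hsq0]
      refine ⟨helper_int hc hr1pos hC1 hC2 hσ2 hkey1 hq_ball, ?_, ?_, ?_⟩
      · exact helper_bd hcdef hε hC1 (norm_nonneg _) hkey1 (by linarith only [hσ3])
      · rw [hhz]
        linarith only [hc]
      · linarith only [hcase, hr2pos]
    · -- above the reference level
      have hhe : max (a₁ - rb) 0 = a₁ - rb := max_eq_left (by linarith only [hcase])
      have hsubq : ((x₁, a₁) : Eu n × ℝ) - (xb, rb) = (x₁ - xb, a₁ - rb) := rfl
      have hple : pnorm (((x₁, a₁) : Eu n × ℝ) - (xb, rb)) ≤ ‖x₁ - xb‖ + (a₁ - rb) := by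
        rw [hsubq]
        refine (pnorm_le_add _).trans ?_
        dsimp only
        rw [abs_of_pos (by linarith only [hcase] : (0:ℝ) < a₁ - rb)]
      have hlt : pnorm (((x₁, a₁) : Eu n × ℝ) - (xb, rb)) < δ := by
        have h1 : a₁ - rb ≤ r2 := by linarith only [hq_ub]
        have h2 : r1 + r2 ≤ δ/2 := by linarith only [hr1δ, hr2def]
        linarith only [hple, hq_ball, h1, h2, hδpos]
      have hn := hδ' _ hq_epi' hlt
      dsimp only at hn
      have hn2 : ⟪v, x₁ - xb⟫ ≤ c * (‖x₁ - xb‖ + (a₁ - rb)) :=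
        hn.trans (mul_le_mul_of_nonneg_left hple hc.le)
      have hσ0 : 0 ≤ σ*(a₁ - rb) := mul_nonneg hσpos.le (by linarith only [hcase])
      have hsqe : C*((max (a₁ - rb) 0)^2) = C*((a₁ - rb)^2) := by rw [hhe]
      have hkey2 : C*(‖x₁ - xb‖^2 + (a₁ - rb)^2) ≤ c*(‖x₁ - xb‖ + (a₁ - rb)) := by
        linarith only [hkey, hn2, hσ0, hsqe]
      have hsum : C*(‖x₁ - xb‖ + (a₁ - rb)) ≤ 2*c :=
        helper_sum hc hC0 (norm_nonneg _) (by linarith only [hcase]) hkey2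
      have hCd0 : 0 ≤ C*‖x₁ - xb‖ := mul_nonneg hC0.le (norm_nonneg _)
      have hCh0 : 0 ≤ C*(a₁ - rb) := mul_nonneg hC0.le (by linarith only [hcase])
      have h2' : C*(‖x₁ - xb‖ + (a₁ - rb)) = C*‖x₁ - xb‖ + C*(a₁ - rb) := by ring
      have hd_lt : ‖x₁ - xb‖ < r1 := by
        by_contra hcon
        push_neg at hcon
        have h1 : C*r1 ≤ C*‖x₁ - xb‖ := mul_le_mul_of_nonneg_left hcon hC0.le
        linarith only [hC2, h1, hsum, hCh0, hc, h2']
      have hh_lt : a₁ - rb < r2 := by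
        by_contra hcon
        push_neg at hcon
        have h1 : C*r2 ≤ C*(a₁ - rb) := mul_le_mul_of_nonneg_left hcon hC0.le
        have h3 : C*δ = 4*(C*r2) := by rw [hr2def]; ring
        linarith only [hC3, h1, hsum, hCd0, hc, h2', h3]
      refine ⟨hd_lt, ?_, ?_, by linarith only [hh_lt]⟩
      · linarith only [hsum, hCh0, h2', hcdef, hε]
      · rw [hhe]
        linarith only [hsum, hCd0, h2']
  obtain ⟨hd_lt, h2Cd, h2Ch, htop⟩ := hmain
  -- pinning : at the minimum, a₁ = (f x₁).toReal
  have hfx₁top : f x₁ ≠ ⊤ := (lt_of_le_of_lt hq_epi' (EReal.coe_lt_top a₁)).ne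
  obtain ⟨A, hAdef⟩ : ∃ A : ℝ, A = (f x₁).toReal := ⟨_, rfl⟩
  have hfx₁ : f x₁ = (A : EReal) := by
    rw [hAdef]; exact (EReal.coe_toReal hfx₁top (hfbot x₁)).symm
  have hAa : A ≤ a₁ := by rwa [hfx₁, EReal.coe_le_coe_iff] at hq_epi'
  have hAb : b + 1 < A := by
    have hdist : dist x₁ xb < ρ₀ := by
      rw [dist_eq_norm]
      linarith only [hd_lt, hr1ρ₀]
    have h1 := hρ₀ hdist
    rw [hfx₁, EReal.coe_lt_coe_iff] at h1
    linarith only [h1, hbdef]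
  have hpinq : a₁ = A := by
    by_contra hne
    have hAlt : A < a₁ := lt_of_le_of_ne hAa (Ne.symm hne)
    have hpK : ((x₁, A) : Eu n × ℝ) ∈ K := by
      refine ⟨?_, hq_ball, ?_, ?_⟩
      · show f x₁ ≤ (A : EReal)
        rw [hfx₁]
      · show b ≤ A
        linarith only [hAb]
      · show A ≤ rb + r2
        linarith only [hAlt, hq_ub]
    have hmin := hqmin hpK
    have hmax_mono : max (A - rb) 0 ≤ max (a₁ - rb) 0 :=
      max_le_max (by linarith only [hAlt]) le_rfl
    have hmax_nonneg : (0:ℝ) ≤ max (A - rb) 0 := le_max_right _ _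
    have hsq : (max (A - rb) 0)^2 ≤ (max (a₁ - rb) 0)^2 :=
      pow_le_pow_left₀ hmax_nonneg hmax_mono 2
    have hCdiff : C*((max (A - rb) 0)^2) - C*((max (a₁ - rb) 0)^2) ≤ 0 := by
      have := mul_le_mul_of_nonneg_left hsq hC0.le
      linarith only [this]
    have hσlt : σ*A - σ*a₁ < 0 := by
      have := mul_lt_mul_of_pos_left hAlt hσpos
      linarith only [this]
    have hΘA := hΘval ((x₁, A) : Eu n × ℝ)
    have hΘa := hΘval ((x₁, a₁) : Eu n × ℝ)
    dsimp only at hΘA hΘa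
    have hmin' : Θ ((x₁, a₁) : Eu n × ℝ) ≤ Θ ((x₁, A) : Eu n × ℝ) := hmin
    rw [hΘA, hΘa] at hmin'
    linarith only [hmin', hCdiff, hσlt]
  -- output data
  obtain ⟨lam, hlamdef⟩ : ∃ lam : ℝ, lam = σ + 2*C*(max (a₁ - rb) 0) := ⟨_, rfl⟩
  have hCh0' : 0 ≤ 2*C*(max (a₁ - rb) 0) :=
    mul_nonneg (by linarith only [hC0] : (0:ℝ) ≤ 2*C) (le_max_right _ _)
  have hlam0 : 0 < lam := by linarith only [hσpos, hCh0', hlamdef]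
  have hlamε : lam ≤ ε := by linarith only [hσc, h2Ch, hcdef, hε, hlamdef]
  set w : Eu n × ℝ := (v - (2*C) • (x₁ - xb), -lam) with hwdef
  have hab : b < a₁ := by
    rw [hpinq]
    linarith only [hAb]
  have hwn : w ∈ frechetNCP (epigraph f) ((x₁, a₁) : Eu n × ℝ) := by
    refine ⟨hq_epi, fun ε₂ hε₂ => ?_⟩
    obtain ⟨η, hηdef⟩ : ∃ η : ℝ, η = min (r1 - ‖x₁ - xb‖) (min (rb + r2 - a₁) (a₁ - b)) :=
      ⟨_, rfl⟩
    have hηpos : 0 < η := by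
      rw [hηdef]
      refine lt_min (by linarith only [hd_lt]) (lt_min (by linarith only [htop]) ?_)
      linarith only [hab]
    have hη1 : η ≤ r1 - ‖x₁ - xb‖ := by rw [hηdef]; exact min_le_left _ _
    have hη2 : η ≤ rb + r2 - a₁ := by
      rw [hηdef]; exact (min_le_right _ _).trans (min_le_left _ _)
    have hη3 : η ≤ a₁ - b := by
      rw [hηdef]; exact (min_le_right _ _).trans (min_le_right _ _)
    refine ⟨min η (ε₂/C), lt_min hηpos (by positivity), ?_⟩
    rintro ⟨py, pβ⟩ hp hpd
    have hsubp : ((py, pβ) : Eu n × ℝ) - (x₁, a₁) = (py - x₁, pβ - a₁) := mk_sub_mk' _ _ _ _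
    rw [hsubp] at hpd ⊢
    have hpdη : pnorm ((py - x₁, pβ - a₁) : Eu n × ℝ) < η := lt_of_lt_of_le hpd (min_le_left _ _)
    have hpdε : pnorm ((py - x₁, pβ - a₁) : Eu n × ℝ) < ε₂/C :=
      lt_of_lt_of_le hpd (min_le_right _ _)
    have hfst : ‖py - x₁‖ ≤ pnorm ((py - x₁, pβ - a₁) : Eu n × ℝ) :=
      pnorm_fst_le ((py - x₁, pβ - a₁) : Eu n × ℝ)
    have hsnd : |pβ - a₁| ≤ pnorm ((py - x₁, pβ - a₁) : Eu n × ℝ) :=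
      pnorm_snd_le ((py - x₁, pβ - a₁) : Eu n × ℝ)
    have habs : |pβ - a₁| < η := lt_of_le_of_lt hsnd hpdη
    have habs1 := (abs_lt.1 habs).1
    have habs2 := (abs_lt.1 habs).2
    have hpK : ((py, pβ) : Eu n × ℝ) ∈ K := by
      refine ⟨hp, ?_, ?_, ?_⟩
      · show ‖py - xb‖ ≤ r1
        have htri : ‖py - xb‖ ≤ ‖py - x₁‖ + ‖x₁ - xb‖ := by
          have h5 : py - xb = (py - x₁) + (x₁ - xb) := by abel
          rw [h5]
          exact norm_add_le _ _
        linarith only [htri, hfst, hpdη, hη1]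
      · show b ≤ pβ
        linarith only [habs1, hη3]
      · show pβ ≤ rb + r2
        linarith only [habs2, hη2]
    have hminp : Θ ((x₁, a₁) : Eu n × ℝ) ≤ Θ ((py, pβ) : Eu n × ℝ) := hqmin hpK
    have he2 : ‖py - xb‖^2 = ‖py - x₁‖^2 + 2*⟪py - x₁, x₁ - xb⟫ + ‖x₁ - xb‖^2 := by
      have h5 : py - xb = (py - x₁) + (x₁ - xb) := by abel
      rw [h5]
      exact norm_add_sq_real _ _
    have he3 : (max (pβ - rb) 0)^2 ≤ (max (a₁ - rb) 0)^2
        + 2*(max (a₁ - rb) 0)*(pβ - a₁) + (pβ - a₁)^2 := by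
      have h0 := max_sq_le_expand (pβ - rb) (a₁ - rb)
      linarith only [h0]
    have he3' : C*((max (pβ - rb) 0)^2) ≤ C*((max (a₁ - rb) 0)^2
        + 2*(max (a₁ - rb) 0)*(pβ - a₁) + (pβ - a₁)^2) :=
      mul_le_mul_of_nonneg_left he3 hC0.le
    have he4 : pinner w ((py - x₁, pβ - a₁) : Eu n × ℝ)
        = ⟪v, py - x₁⟫ - 2*C*⟪x₁ - xb, py - x₁⟫
          - (σ + 2*C*(max (a₁ - rb) 0))*(pβ - a₁) := by
      show ⟪v - (2*C) • (x₁ - xb), py - x₁⟫ + (-lam) * (pβ - a₁) = _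
      rw [inner_sub_left, real_inner_smul_left, hlamdef]
      ring
    have he5 : ⟪v, py - xb⟫ = ⟪v, py - x₁⟫ + ⟪v, x₁ - xb⟫ := by
      have h5 : py - xb = (py - x₁) + (x₁ - xb) := by abel
      rw [h5, inner_add_right]
    have hcomm : ⟪py - x₁, x₁ - xb⟫ = ⟪x₁ - xb, py - x₁⟫ := real_inner_comm _ _
    have hcomm' : C * ⟪py - x₁, x₁ - xb⟫ = C * ⟪x₁ - xb, py - x₁⟫ := by rw [hcomm]
    have hTp := hΘval ((py, pβ) : Eu n × ℝ)
    have hTq := hΘval ((x₁, a₁) : Eu n × ℝ)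
    dsimp only at hTq hTp
    have hdiff : 0 ≤ Θ ((py, pβ) : Eu n × ℝ) - Θ ((x₁, a₁) : Eu n × ℝ) := by
      linarith only [hminp]
    rw [hTp, hTq, he2, he5] at hdiff
    have hgoal1 : pinner w ((py - x₁, pβ - a₁) : Eu n × ℝ)
        ≤ C*(‖py - x₁‖^2 + (pβ - a₁)^2) := by
      rw [he4]
      linarith only [hdiff, he3', hcomm']
    have hpn2 : pnorm ((py - x₁, pβ - a₁) : Eu n × ℝ)^2 = ‖py - x₁‖^2 + (pβ - a₁)^2 :=
      pnorm_sq ((py - x₁, pβ - a₁) : Eu n × ℝ)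
    calc pinner w ((py - x₁, pβ - a₁) : Eu n × ℝ) ≤ C*(‖py - x₁‖^2 + (pβ - a₁)^2) := hgoal1
      _ = C * pnorm ((py - x₁, pβ - a₁) : Eu n × ℝ)^2 := by rw [hpn2]
      _ ≤ ε₂ * pnorm ((py - x₁, pβ - a₁) : Eu n × ℝ) := helper_fin hC0 hpdε (pnorm_nonneg _)
  -- final packaging
  refine ⟨x₁, lam, lam⁻¹ • w.1, ?_, hlam0, hlamε, ?_, ?_⟩
  · linarith only [hd_lt, hr1ε, hε]
  · have hsm := frechetNCP_smul hwn (t := lam⁻¹) (inv_pos.2 hlam0)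
    have hsw : lam⁻¹ • w = ((lam⁻¹ • w.1, (-1:ℝ)) : Eu n × ℝ) := by
      ext
      · rfl
      · show lam⁻¹ * (-lam) = -1
        rw [mul_neg, inv_mul_cancel₀ (ne_of_gt hlam0)]
    rw [hsw] at hsm
    rw [frechetSubdiff, mem_setOf_eq]
    have htr : (f x₁).toReal = a₁ := by rw [← hAdef]; exact hpinq.symm
    rw [htr]
    exact hsm
  · have hlg : lam • (lam⁻¹ • w.1) = w.1 := by
      rw [smul_smul, mul_inv_cancel₀ (ne_of_gt hlam0), one_smul]
    rw [hlg]
    have hw1 : w.1 - v = -((2*C) • (x₁ - xb)) := by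
      simp only [hwdef]
      abel
    rw [hw1, norm_neg, norm_smul, Real.norm_eq_abs,
      abs_of_pos (by positivity : (0:ℝ) < 2*C)]
    linarith only [h2Cd, hε]


end Aux


open Aux in
theorem dirSubdiffInfty_limit_characterizations_aux {n : ℕ} (f : Eu n → EReal)
    (hf : LowerSemicontinuous f) (hfbot : ∀ x, f x ≠ ⊥) (u : Eu n) :
    (dirSubdiffInfty f u =
        {ξ | ∃ (x v : ℕ → Eu n), TendstoDirInfty x u ∧
            (∀ k, v k ∈ limitingSubdiff f (x k)) ∧ Tendsto v atTop (𝓝 ξ)} ∧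
      dirSubdiffInfty f u =
        {ξ | ∃ (x v : ℕ → Eu n), TendstoDirInfty x u ∧
            (∀ k, v k ∈ frechetSubdiff f (x k)) ∧ Tendsto v atTop (𝓝 ξ)}) ∧
    (dirSingSubdiffInfty f u =
        {ξ | ∃ (x : ℕ → Eu n) (r : ℕ → ℝ) (v : ℕ → Eu n), TendstoDirInfty x u ∧
            (∀ k, 0 < r k) ∧ Tendsto r atTop (𝓝 (0 : ℝ)) ∧
            (∀ k, v k ∈ limitingSubdiff f (x k)) ∧
            Tendsto (fun k => r k • v k) atTop (𝓝 ξ)} ∧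
      {ξ | ∃ (x v : ℕ → Eu n), TendstoDirInfty x u ∧
          (∀ k, v k ∈ singSubdiff f (x k)) ∧ Tendsto v atTop (𝓝 ξ)} ⊆
        dirSingSubdiffInfty f u) := by
  have hone : ∀ k : ℕ, 1/((k:ℝ)+1) ≤ 1 := by
    intro k
    rw [div_le_one (by positivity)]
    linarith [Nat.cast_nonneg (α := ℝ) k]
  -- Inclusion A : dirSubdiffInfty ⊆ Fréchet-limits set
  have hA : dirSubdiffInfty f u ⊆
      {ξ | ∃ (x v : ℕ → Eu n), TendstoDirInfty x u ∧
          (∀ k, v k ∈ frechetSubdiff f (x k)) ∧ Tendsto v atTop (𝓝 ξ)} := by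
    rintro ξ ⟨x, r, w, hx, hr, hw, hlim⟩
    have hsndlim : Tendsto (fun k => (w k).2) atTop (𝓝 (-1:ℝ)) :=
      (continuous_snd.tendsto ((ξ, (-1:ℝ)) : Eu n × ℝ)).comp hlim
    have hev : ∀ᶠ k in atTop, (w k).2 < -(1/2) :=
      hsndlim.eventually_lt_const (by norm_num)
    obtain ⟨N, hN⟩ := eventually_atTop.1 hev
    have hneg : ∀ k : ℕ, (w (k+N)).2 < 0 := fun k =>
      lt_trans (hN _ (Nat.le_add_left N k)) (by norm_num)
    refine ⟨fun k => x (k+N), fun k => (-(w (k+N)).2)⁻¹ • (w (k+N)).1,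
      tendstoDirInfty_tail hx N, fun k => frechetSubdiff_of_neg hfbot (hw (k+N)) (hneg k), ?_⟩
    have hG : ContinuousAt (fun p : Eu n × ℝ => (-p.2)⁻¹ • p.1) ((ξ, (-1:ℝ)) : Eu n × ℝ) := by
      have h2 : ContinuousAt (fun p : Eu n × ℝ => (-p.2)⁻¹) ((ξ, (-1:ℝ)) : Eu n × ℝ) :=
        (continuousAt_snd.neg).inv₀ (by norm_num)
      exact h2.smul continuousAt_fst
    have := hG.tendsto.comp (hlim.comp (tendsto_add_atTop_nat N))
    simpa [Function.comp_def] using this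
  -- Inclusion B : Fréchet set ⊆ limiting set
  have hB : {ξ | ∃ (x v : ℕ → Eu n), TendstoDirInfty x u ∧
        (∀ k, v k ∈ frechetSubdiff f (x k)) ∧ Tendsto v atTop (𝓝 ξ)} ⊆
      {ξ | ∃ (x v : ℕ → Eu n), TendstoDirInfty x u ∧
        (∀ k, v k ∈ limitingSubdiff f (x k)) ∧ Tendsto v atTop (𝓝 ξ)} := by
    rintro ξ ⟨x, v, hx, hv, hlim⟩
    exact ⟨x, v, hx, fun k => frechetSubdiff_subset_limiting (hv k), hlim⟩
  -- Inclusion C : limiting set ⊆ dirSubdiffInfty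
  have hC : {ξ | ∃ (x v : ℕ → Eu n), TendstoDirInfty x u ∧
        (∀ k, v k ∈ limitingSubdiff f (x k)) ∧ Tendsto v atTop (𝓝 ξ)} ⊆
      dirSubdiffInfty f u := by
    rintro ξ ⟨x, v, hx, hv, hlim⟩
    have hql : Tendsto (fun k => ((v k, (-1:ℝ)) : Eu n × ℝ)) atTop (𝓝 (ξ, (-1:ℝ))) :=
      hlim.prodMk_nhds tendsto_const_nhds
    obtain ⟨X, R, W, h1, h2, h3, h4⟩ := toInfty_data hx (fun k => hv k) hql
    exact ⟨X, R, W, h1, h2, h3, h4⟩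
  -- Inclusion F : singular pointwise limits ⊆ dirSingSubdiffInfty
  have hF : {ξ | ∃ (x v : ℕ → Eu n), TendstoDirInfty x u ∧
        (∀ k, v k ∈ singSubdiff f (x k)) ∧ Tendsto v atTop (𝓝 ξ)} ⊆
      dirSingSubdiffInfty f u := by
    rintro ξ ⟨x, v, hx, hv, hlim⟩
    have hql : Tendsto (fun k => ((v k, (0:ℝ)) : Eu n × ℝ)) atTop (𝓝 (ξ, (0:ℝ))) :=
      hlim.prodMk_nhds tendsto_const_nhds
    obtain ⟨X, R, W, h1, h2, h3, h4⟩ := toInfty_data hx (fun k => hv k) hql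
    exact ⟨X, R, W, h1, h2, h3, h4⟩
  -- Inclusion D : dirSingSubdiffInfty ⊆ scaled limits set
  have hD : dirSingSubdiffInfty f u ⊆
      {ξ | ∃ (x : ℕ → Eu n) (r : ℕ → ℝ) (v : ℕ → Eu n), TendstoDirInfty x u ∧
          (∀ k, 0 < r k) ∧ Tendsto r atTop (𝓝 (0 : ℝ)) ∧
          (∀ k, v k ∈ limitingSubdiff f (x k)) ∧
          Tendsto (fun k => r k • v k) atTop (𝓝 ξ)} := by
    rintro ξ ⟨x, r, w, hx, hr, hw, hlim⟩
    have hch : ∀ k, ∃ (x' : Eu n) (lam : ℝ) (g : Eu n), ‖x' - x k‖ ≤ 1/((k:ℝ)+1) ∧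
        0 < lam ∧ lam ≤ -(w k).2 + 1/((k:ℝ)+1) ∧ g ∈ frechetSubdiff f x' ∧
        ‖lam • g - (w k).1‖ ≤ 1/((k:ℝ)+1) := by
      intro k
      have hpos : (0:ℝ) < 1/((k:ℝ)+1) := by positivity
      rcases lt_or_eq_of_le (snd_nonpos (hw k)) with hneg | hzero
      · refine ⟨x k, -(w k).2, (-(w k).2)⁻¹ • (w k).1, by simp; positivity, by linarith,
          by linarith, frechetSubdiff_of_neg hfbot (hw k) hneg, ?_⟩
        rw [smul_smul, mul_inv_cancel₀ (by linarith : -(w k).2 ≠ 0), one_smul, sub_self,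
          norm_zero]
        positivity
      · have hw0 : (((w k).1, (0:ℝ)) : Eu n × ℝ) ∈ frechetNCP (epigraph f) (x k, r k) := by
          have heq : (((w k).1, (0:ℝ)) : Eu n × ℝ) = w k := by
            rw [← hzero]
          rw [heq]
          exact hw k
        obtain ⟨x', lam, g, h1, h2, h3, h4, h5⟩ := lemA hf hfbot hw0 hpos
        exact ⟨x', lam, g, h1, h2, by rw [hzero, neg_zero, zero_add]; exact h3, h4, h5⟩
    choose x' lam g h1 h2 h3 h4 h5 using hch
    have hsnd0 : Tendsto (fun k => (w k).2) atTop (𝓝 (0:ℝ)) :=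
      (continuous_snd.tendsto ((ξ, (0:ℝ)) : Eu n × ℝ)).comp hlim
    have hbound : Tendsto (fun k => -(w k).2 + 1/((k:ℝ)+1)) atTop (𝓝 (0:ℝ)) := by
      have := (hsnd0.neg).add tendsto_inv_nat
      simpa using this
    refine ⟨x', lam, g,
      tendstoDirInfty_of_close hx (fun k => le_trans (h1 k) (hone k)), h2, ?_,
      fun k => frechetSubdiff_subset_limiting (h4 k), ?_⟩
    · exact squeeze_zero (fun k => (h2 k).le) h3 hbound
    · have hfst : Tendsto (fun k => (w k).1) atTop (𝓝 ξ) :=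
        (continuous_fst.tendsto ((ξ, (0:ℝ)) : Eu n × ℝ)).comp hlim
      exact tendsto_of_norm_sub_le hfst h5
  -- Inclusion E : scaled limits set ⊆ dirSingSubdiffInfty
  have hE : {ξ | ∃ (x : ℕ → Eu n) (r : ℕ → ℝ) (v : ℕ → Eu n), TendstoDirInfty x u ∧
        (∀ k, 0 < r k) ∧ Tendsto r atTop (𝓝 (0 : ℝ)) ∧
        (∀ k, v k ∈ limitingSubdiff f (x k)) ∧
        Tendsto (fun k => r k • v k) atTop (𝓝 ξ)} ⊆ dirSingSubdiffInfty f u := by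
    rintro ξ ⟨x, r, v, hx, hrpos, hr0, hv, hlim⟩
    have hch : ∀ k, ∃ s' w', s' ∈ epigraph f ∧
        ‖s' - ((x k, (f (x k)).toReal) : Eu n × ℝ)‖ < 1/((k:ℝ)+1) ∧
        w' ∈ frechetNCP (epigraph f) s' ∧ ‖w' - ((v k, (-1:ℝ)) : Eu n × ℝ)‖ < 1/((k:ℝ)+1) := by
      intro k
      exact approx_of_limitingNCP (hv k) (by positivity)
    choose s' w' hs1 hs2 hs3 hs4 using hch
    refine ⟨fun k => (s' k).1, fun k => (s' k).2, fun k => r k • w' k, ?_, ?_, ?_, ?_⟩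
    · apply tendstoDirInfty_of_close hx
      intro k
      have hle : ‖(s' k - ((x k, (f (x k)).toReal) : Eu n × ℝ)).1‖
          ≤ ‖s' k - ((x k, (f (x k)).toReal) : Eu n × ℝ)‖ := norm_fst_le _
      calc ‖(s' k).1 - x k‖ = ‖(s' k - ((x k, (f (x k)).toReal) : Eu n × ℝ)).1‖ := rfl
        _ ≤ ‖s' k - ((x k, (f (x k)).toReal) : Eu n × ℝ)‖ := hle
        _ ≤ 1/((k:ℝ)+1) := (hs2 k).le
        _ ≤ 1 := hone k
    · exact fun k => hs1 k
    · intro k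
      have heq : (((s' k).1, (s' k).2) : Eu n × ℝ) = s' k := rfl
      rw [heq]
      exact frechetNCP_smul (hs3 k) (hrpos k)
    · have hWdef : ∀ k, r k • w' k
          = ((r k • v k, -(r k)) : Eu n × ℝ) + r k • (w' k - ((v k, (-1:ℝ)) : Eu n × ℝ)) := by
        intro k
        have h6 : ((r k • v k, -(r k)) : Eu n × ℝ) = r k • ((v k, (-1:ℝ)) : Eu n × ℝ) := by
          ext
          · rfl
          · show -(r k) = r k * (-1)
            ring
        rw [h6, ← smul_add]
        congr 1
        abel
      have hlimA : Tendsto (fun k => ((r k • v k, -(r k)) : Eu n × ℝ)) atTop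
          (𝓝 ((ξ, (0:ℝ)) : Eu n × ℝ)) := by
        have hneg : Tendsto (fun k => -(r k)) atTop (𝓝 (0:ℝ)) := by
          simpa using hr0.neg
        exact hlim.prodMk_nhds hneg
      have hlimB : Tendsto (fun k => r k • (w' k - ((v k, (-1:ℝ)) : Eu n × ℝ))) atTop
          (𝓝 (0 : Eu n × ℝ)) := by
        rw [tendsto_zero_iff_norm_tendsto_zero]
        have hb : ∀ k, ‖r k • (w' k - ((v k, (-1:ℝ)) : Eu n × ℝ))‖ ≤ r k * (1/((k:ℝ)+1)) := by
          intro k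
          rw [norm_smul, Real.norm_eq_abs, abs_of_pos (hrpos k)]
          exact mul_le_mul_of_nonneg_left (hs4 k).le (hrpos k).le
        have hprod : Tendsto (fun k => r k * (1/((k:ℝ)+1))) atTop (𝓝 (0:ℝ)) := by
          have := hr0.mul tendsto_inv_nat
          simpa using this
        exact squeeze_zero (fun k => norm_nonneg _) hb hprod
      have h7 : Tendsto (fun k => ((r k • v k, -(r k)) : Eu n × ℝ)
          + r k • (w' k - ((v k, (-1:ℝ)) : Eu n × ℝ))) atTop (𝓝 ((ξ, (0:ℝ)) : Eu n × ℝ)) := by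
        simpa using hlimA.add hlimB
      exact h7.congr (fun k => (hWdef k).symm)
  exact ⟨⟨Subset.antisymm (fun ξ h => hB (hA h)) hC, Subset.antisymm hA (fun ξ h => hC (hB h))⟩,
    Subset.antisymm hD hE, hF⟩

/-- Limiting characterizations of the directional subdifferentials
at infinity via (Fréchet/limiting/singular) subdifferentials at points. -/
theorem dirSubdiffInfty_limit_characterizations {n : ℕ} (f : Eu n → EReal)
    (hf : LowerSemicontinuous f) (hfbot : ∀ x, f x ≠ ⊥)
    (u : Eu n) (hu1 : ‖u‖ = 1) (hdom : u ∈ asymptoticCone' {x | f x < ⊤}) :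
    (dirSubdiffInfty f u =
        {ξ | ∃ (x v : ℕ → Eu n), TendstoDirInfty x u ∧
            (∀ k, v k ∈ limitingSubdiff f (x k)) ∧ Tendsto v atTop (𝓝 ξ)} ∧
      dirSubdiffInfty f u =
        {ξ | ∃ (x v : ℕ → Eu n), TendstoDirInfty x u ∧
            (∀ k, v k ∈ frechetSubdiff f (x k)) ∧ Tendsto v atTop (𝓝 ξ)}) ∧
    (dirSingSubdiffInfty f u =
        {ξ | ∃ (x : ℕ → Eu n) (r : ℕ → ℝ) (v : ℕ → Eu n), TendstoDirInfty x u ∧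
            (∀ k, 0 < r k) ∧ Tendsto r atTop (𝓝 (0 : ℝ)) ∧
            (∀ k, v k ∈ limitingSubdiff f (x k)) ∧
            Tendsto (fun k => r k • v k) atTop (𝓝 ξ)} ∧
      {ξ | ∃ (x v : ℕ → Eu n), TendstoDirInfty x u ∧
          (∀ k, v k ∈ singSubdiff f (x k)) ∧ Tendsto v atTop (𝓝 ξ)} ⊆
        dirSingSubdiffInfty f u) :=
  dirSubdiffInfty_limit_characterizations_aux f hf hfbot u
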